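/- arXiv:1403.7606 — 5 statements merged into one kernel-verified Lean document; each statement's English description precedes it below -/
import Mathlib

section
/- Let G = G₁ × ⋯ × Gₙ be a direct product of finite groups and let φ : G → G be the automorphism φ(g₁,…,gₙ) = (φₙ(gₙ), φ₁(g₁), …, φ_{n-1}(g_{n-1})) where each φᵢ : Gᵢ → G_{i+1} (indices mod n) is a group isomorphism. Set ψ₁ = φₙ ∘ φ_{n-1} ∘ ⋯ ∘ φ₁ : G₁ → G₁ (equivalently ψ₁ = φₙ⋯φ₁ composed appropriately so it is an automorphism of G₁). Then the inclusion g ↦ (g, 1, …, 1) induces a bijection from the set of ψ₁-conjugacy classes H¹(G₁, ψ₁) onto the set of φ-conjugacy classes H¹(G, φ). -/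
/-!
Each coordinate `(φ z) i` depends only on `z (i - 1)`. Hence the conditions `(φ z) i = z i * g i`
for `i ≠ 0` can be met one coordinate at a time, going once around the cycle from an arbitrary
value of `z 0`; for such `z` the element `z⁻¹ * g * φ z` is supported at `0`. Taking `g = 1`, the
`z` with `(φ z) i = z i` for all `i ≠ 0` are exactly the lifts of `z 0` along the cycle, and for them
`(φ z) 0 = (φ ^ n) z 0 = ψ₁ (z 0)`. So a `φ`-conjugacy between elements supported at `0` is the
same thing as a `ψ₁`-conjugacy in `Gi 0`.
-/

theorem Pi.mulSingle_eq_inv_mul_mulSingle_mul_iff {ι : Type*} [DecidableEq ι] {G : ι → Type*}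
    [∀ i, Group (G i)] {i₀ : ι} {x y : G i₀} {z w : ∀ i, G i} :
    Pi.mulSingle i₀ x = z⁻¹ * Pi.mulSingle i₀ y * w ↔
      x = (z i₀)⁻¹ * y * w i₀ ∧ ∀ i ≠ i₀, w i = z i := by
  rw [funext_iff]
  refine ⟨fun h => ⟨by simpa using h i₀, fun i hi => ?_⟩, fun ⟨h₀, h⟩ i => ?_⟩
  · simpa [hi, inv_mul_eq_one, eq_comm] using h i
  · obtain rfl | hi := eq_or_ne i i₀
    · simp [h₀]
    · simp [hi, h i hi]

namespace Fin

theorem val_neg_one_of_neZero {n : ℕ} [NeZero n] : ((-1 : Fin n) : ℕ) = n - 1 := by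
  obtain ⟨m, rfl⟩ := Nat.exists_eq_succ_of_ne_zero (NeZero.ne n)
  simp

end Fin

section CyclicShift

variable {n : ℕ} [NeZero n] {G : Fin n → Type*} [∀ i, Group (G i)]
  {f : ∀ i, G i → G (i + 1)} {φ : MulAut (∀ i, G i)}

theorem apply_eq_apply_of_apply_sub_one_eq (hφ : ∀ g i, φ g (i + 1) = f i (g i))
    {z w : ∀ i, G i} {i : Fin n} (h : z (i - 1) = w (i - 1)) : φ z i = φ w i := by
  obtain ⟨j, rfl⟩ : ∃ j, j + 1 = i := ⟨i - 1, sub_add_cancel i 1⟩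
  rw [add_sub_cancel_right] at h
  rw [hφ, hφ, h]

theorem exists_apply_eq_mul_of_ne_zero (hφ : ∀ g i, φ g (i + 1) = f i (g i))
    (g : ∀ i, G i) (c : G 0) : ∃ z : ∀ i, G i, z 0 = c ∧ ∀ i ≠ 0, φ z i = z i * g i := by
  suffices ∀ m : ℕ, ∃ z : ∀ i, G i,
      z 0 = c ∧ ∀ i : Fin n, i ≠ 0 → (i : ℕ) ≤ m → φ z i = z i * g i by
    obtain ⟨z, hz₀, hz⟩ := this n
    exact ⟨z, hz₀, fun i hi => hz i hi i.isLt.le⟩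
  intro m
  induction m with
  | zero =>
    exact ⟨Pi.mulSingle 0 c, by simp, fun i hi hi₀ => (hi (Fin.val_eq_zero_iff.mp (by omega))).elim⟩
  | succ m ih =>
    obtain ⟨z, hz₀, hz⟩ := ih
    by_cases hm : m + 1 < n
    · -- Redefining `z` at `j` only changes `φ z` at `j + 1`, which is `0` or beyond `m + 1`.
      set j : Fin n := ⟨m + 1, hm⟩
      have hj : j ≠ 0 := Fin.ne_of_val_ne (by simp [j])
      refine ⟨Function.update z j (φ z j * (g j)⁻¹), by simp [hj.symm, hz₀], fun i hi him => ?_⟩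
      have hpred : i - 1 ≠ j :=
        Fin.ne_of_val_ne (by rw [Fin.val_sub_one_of_ne_zero hi]; change _ ≠ m + 1; omega)
      rw [apply_eq_apply_of_apply_sub_one_eq hφ (Function.update_of_ne hpred _ _)]
      obtain rfl | hij := eq_or_ne i j
      · simp
      · have : (i : ℕ) ≠ m + 1 := fun h => hij (Fin.ext h)
        rw [Function.update_of_ne hij, hz i hi (by omega)]
    · exact ⟨z, hz₀, fun i hi _ => hz i hi (by omega)⟩

theorem pow_apply_zero_of_apply_eq (hφ : ∀ g i, φ g (i + 1) = f i (g i)) {z : ∀ i, G i}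
    (hz : ∀ i ≠ 0, φ z i = z i) : (φ ^ n) z 0 = φ z 0 := by
  have hpow : ∀ k, ∀ i : Fin n, k ≤ (i : ℕ) → (φ ^ k) z i = z i := by
    intro k
    induction k with
    | zero => intro i _; rfl
    | succ k ih =>
      intro i hki
      have hi : i ≠ 0 := fun h => by simp [h] at hki
      rw [pow_succ', MulAut.mul_apply, ← hz i hi]
      refine apply_eq_apply_of_apply_sub_one_eq hφ (ih _ ?_)
      rw [Fin.val_sub_one_of_ne_zero hi]
      omega
  obtain ⟨m, hm⟩ := Nat.exists_eq_add_one_of_ne_zero (NeZero.ne n)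
  rw [show φ ^ n = φ * φ ^ m by rw [← pow_succ', ← hm], MulAut.mul_apply]
  refine apply_eq_apply_of_apply_sub_one_eq hφ (hpow m _ ?_)
  rw [zero_sub, Fin.val_neg_one_of_neZero]
  omega

end CyclicShift

theorem phiConjClasses_bijection_cyclic_general {n : ℕ} [NeZero n]
    (Gi : Fin n → Type*) [∀ i, Group (Gi i)]
    (φi : ∀ i : Fin n, Gi i ≃* Gi (i + 1))
    (φ : MulAut (∀ i, Gi i))
    (hφ : ∀ (g : ∀ i, Gi i) (i : Fin n), φ g (i + 1) = φi i (g i))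
    (ψ₁ : MulAut (Gi 0))
    (hψ₁ : ∀ g : ∀ i, Gi i, (φ ^ n) g 0 = ψ₁ (g 0)) :
    (∀ x y : Gi 0,
        (∃ z : Gi 0, x = z⁻¹ * y * ψ₁ z) ↔
          ∃ z : ∀ i, Gi i,
            (Pi.mulSingle 0 x : ∀ i, Gi i) = z⁻¹ * Pi.mulSingle 0 y * φ z) ∧
      ∀ g : ∀ i, Gi i, ∃ (x : Gi 0) (z : ∀ i, Gi i),
        g = z⁻¹ * Pi.mulSingle 0 x * φ z := by
  have hψ : ∀ z : ∀ i, Gi i, (∀ i ≠ 0, φ z i = z i) → φ z 0 = ψ₁ (z 0) := fun z hz =>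
    (pow_apply_zero_of_apply_eq hφ hz).symm.trans (hψ₁ z)
  refine ⟨fun x y => ⟨?_, ?_⟩, fun g => ?_⟩
  · rintro ⟨z, rfl⟩
    obtain ⟨w, rfl, hw⟩ := exists_apply_eq_mul_of_ne_zero hφ 1 z
    simp only [Pi.one_apply, mul_one] at hw
    exact ⟨w, Pi.mulSingle_eq_inv_mul_mulSingle_mul_iff.mpr ⟨by rw [hψ w hw], hw⟩⟩
  · rintro ⟨w, hw⟩
    obtain ⟨rfl, hfix⟩ := Pi.mulSingle_eq_inv_mul_mulSingle_mul_iff.mp hw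
    exact ⟨w 0, by rw [hψ w hfix]⟩
  · obtain ⟨z, -, hz⟩ := exists_apply_eq_mul_of_ne_zero hφ g 1
    refine ⟨z 0 * g 0 * (φ z 0)⁻¹, z, funext fun i => ?_⟩
    obtain rfl | hi := eq_or_ne i 0
    · simp [mul_assoc]
    · simp [hi, hz i hi]

/-- Let `G = G₁ × ⋯ × Gₙ` and let `φ` be the automorphism cyclically
permuting the factors via isomorphisms `φᵢ : Gᵢ → G_{i+1}` (indices mod `n`), so that
`φ(g) (i+1) = φᵢ(g i)`.  Let `ψ₁` be the around-the-cycle composite automorphism of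
`G₁` (equivalently, `(φ^n g) 0 = ψ₁ (g 0)`).  Then `g ↦ (g,1,…,1)` induces a bijection
`H¹(G₁, ψ₁) → H¹(G, φ)` of twisted conjugacy classes: it identifies the ψ₁-conjugacy
relation with the φ-conjugacy relation, and every element of `G` is φ-conjugate to the
image of some element of `G₁`. -/
theorem phiConjClasses_bijection_cyclic {n : ℕ} [NeZero n]
    (Gi : Fin n → Type*) [∀ i, Group (Gi i)] [∀ i, Fintype (Gi i)]
    (φi : ∀ i : Fin n, Gi i ≃* Gi (i + 1))
    (φ : MulAut (∀ i, Gi i))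
    (hφ : ∀ (g : ∀ i, Gi i) (i : Fin n), φ g (i + 1) = φi i (g i))
    (ψ₁ : MulAut (Gi 0))
    (hψ₁ : ∀ g : ∀ i, Gi i, (φ ^ n) g 0 = ψ₁ (g 0)) :
    (∀ x y : Gi 0,
        (∃ z : Gi 0, x = z⁻¹ * y * ψ₁ z) ↔
          ∃ z : ∀ i, Gi i,
            (Pi.mulSingle 0 x : ∀ i, Gi i) = z⁻¹ * Pi.mulSingle 0 y * φ z) ∧
      ∀ g : ∀ i, Gi i, ∃ (x : Gi 0) (z : ∀ i, Gi i),
        g = z⁻¹ * Pi.mulSingle 0 x * φ z :=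
  phiConjClasses_bijection_cyclic_general Gi φi φ hφ ψ₁ hψ₁
end

section
/- In the setting of a direct product G = G₁ × ⋯ × Gₙ with cyclic-permutation automorphism φ as above, for every g ∈ G₁ the φ-centraliser of ḡ = (g,1,…,1) in G has the same cardinality as the ψ₁-centraliser of g in G₁: |C_{G,φ}(ḡ)| = |C_{G₁,ψ₁}(g)|. -/
/-!
An element `k` of the product lies in the `φ`-centraliser of `(g, 1, …, 1)` exactly when
`φ k` agrees with `k` off the first coordinate and `(k 0)⁻¹ * g * φ k 0 = g`. The first
condition says `k (i + 1) = φᵢ (k i)` along the cycle, so `k` is determined by `k 0` and is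
`(x, φ₀ x, φ₁ φ₀ x, …)` for `x = k 0`; going once more around the cycle gives `φ k 0 = ψ₁ x`.
Hence `k ↦ k 0` is a bijection onto the `ψ₁`-centraliser of `g`.
-/

theorem inv_mul_mulSingle_mul_eq_mulSingle_iff {ι : Type*} [DecidableEq ι] {G : ι → Type*}
    [∀ i, Group (G i)] {i₀ : ι} {g : G i₀} {k y : ∀ i, G i} :
    k⁻¹ * Pi.mulSingle i₀ g * y = Pi.mulSingle i₀ g ↔
      (k i₀)⁻¹ * g * y i₀ = g ∧ ∀ i ≠ i₀, y i = k i := by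
  rw [funext_iff, ← and_forall_ne i₀]
  simp only [Pi.mul_apply, Pi.inv_apply, Pi.mulSingle_eq_same]
  refine and_congr_right' (forall₂_congr fun i hi => ?_)
  rw [Pi.mulSingle_eq_of_ne hi, mul_one, inv_mul_eq_one, eq_comm]

section CyclicProduct

variable {n : ℕ} {G : Fin (n + 1) → Type*} [∀ i, Group (G i)]

/-- Given `φ g (i + 1) = φᵢ (g i)`, this is `(x, φ₀ x, φ₁ φ₀ x, …)`; reading it off the powers
of `φ` avoids a dependent recursion over `Fin`. -/
def cyclicLift (φ : MulAut (∀ i, G i)) (x : G 0) : ∀ i, G i :=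
  fun i => (φ ^ (i : ℕ)) (Pi.mulSingle 0 x) i

theorem cyclicLift_zero (φ : MulAut (∀ i, G i)) (x : G 0) : cyclicLift φ x 0 = x := by
  simp [cyclicLift]

variable {φi : ∀ i, G i ≃* G (i + 1)} {φ : MulAut (∀ i, G i)}

theorem pow_succ_apply_add_one (hφ : ∀ g i, φ g (i + 1) = φi i (g i))
    (j : ℕ) (g : ∀ i, G i) (i : Fin (n + 1)) :
    (φ ^ (j + 1)) g (i + 1) = φi i ((φ ^ j) g i) := by
  rw [pow_succ', MulAut.mul_apply, hφ]

theorem cyclicLift_add_one (hφ : ∀ g i, φ g (i + 1) = φi i (g i)) (x : G 0)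
    {i : Fin (n + 1)} (hi : i ≠ Fin.last n) :
    cyclicLift φ x (i + 1) = φi i (cyclicLift φ x i) := by
  simp only [cyclicLift, Fin.val_add_one_of_lt (Fin.lt_last_iff_ne_last.2 hi)]
  exact pow_succ_apply_add_one hφ _ _ _

theorem apply_cyclicLift_zero (hφ : ∀ g i, φ g (i + 1) = φi i (g i)) {ψ : MulAut (G 0)}
    (hψ : ∀ g, (φ ^ (n + 1)) g 0 = ψ (g 0)) (x : G 0) :
    φ (cyclicLift φ x) 0 = ψ x := by
  have h : φ (cyclicLift φ x) (Fin.last n + 1) =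
      (φ ^ (n + 1)) (Pi.mulSingle 0 x) (Fin.last n + 1) := by
    rw [hφ, pow_succ_apply_add_one hφ]
    rfl
  rw [Fin.last_add_one] at h
  rw [h, hψ, Pi.mulSingle_eq_same]

theorem forall_ne_zero_apply_eq_iff_eq_cyclicLift (hφ : ∀ g i, φ g (i + 1) = φi i (g i))
    {k : ∀ i, G i} :
    (∀ i ≠ 0, φ k i = k i) ↔ k = cyclicLift φ (k 0) := by
  constructor
  · intro hk
    funext i
    induction i using Fin.induction with
    | zero => exact (cyclicLift_zero φ _).symm
    | succ j ih =>
      have hj : j.castSucc ≠ Fin.last n := (Fin.castSucc_lt_last j).ne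
      have hsucc : j.castSucc + 1 ≠ 0 := Fin.coeSucc_eq_succ ▸ Fin.succ_ne_zero j
      rw [← Fin.coeSucc_eq_succ, ← hk _ hsucc, hφ, ih, cyclicLift_add_one hφ _ hj]
  · intro hk i hi
    obtain ⟨j, rfl⟩ : ∃ j, i = j + 1 := ⟨i - 1, (sub_add_cancel i 1).symm⟩
    have hj : j ≠ Fin.last n := fun h => hi (h ▸ Fin.last_add_one n)
    rw [hk, hφ, cyclicLift_add_one hφ _ hj]

end CyclicProduct

theorem card_phiCentraliser_eq_cyclic_general {n : ℕ} [NeZero n]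
    (Gi : Fin n → Type*) [∀ i, Group (Gi i)]
    (φi : ∀ i : Fin n, Gi i ≃* Gi (i + 1))
    (φ : MulAut (∀ i, Gi i))
    (hφ : ∀ (g : ∀ i, Gi i) (i : Fin n), φ g (i + 1) = φi i (g i))
    (ψ₁ : MulAut (Gi 0))
    (hψ₁ : ∀ g : ∀ i, Gi i, (φ ^ n) g 0 = ψ₁ (g 0))
    (g : Gi 0) :
    Nat.card {k : ∀ i, Gi i //
        k⁻¹ * Pi.mulSingle 0 g * φ k = Pi.mulSingle 0 g} =
      Nat.card {k : Gi 0 // k⁻¹ * g * ψ₁ k = g} := by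
  obtain ⟨n, rfl⟩ := Nat.exists_eq_add_one_of_ne_zero (NeZero.ne n)
  have hmem (k : ∀ i, Gi i) : k⁻¹ * Pi.mulSingle 0 g * φ k = Pi.mulSingle 0 g ↔
      k = cyclicLift φ (k 0) ∧ (k 0)⁻¹ * g * ψ₁ (k 0) = g := by
    rw [inv_mul_mulSingle_mul_eq_mulSingle_iff, forall_ne_zero_apply_eq_iff_eq_cyclicLift hφ,
      and_comm]
    exact and_congr_right fun hk => by rw [← apply_cyclicLift_zero hφ hψ₁ (k 0), ← hk]
  exact Nat.card_congr
    { toFun := fun k => ⟨k.1 0, ((hmem k.1).1 k.2).2⟩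
      invFun := fun x =>
        ⟨cyclicLift φ x.1, (hmem _).2 (by rw [cyclicLift_zero]; exact ⟨rfl, x.2⟩)⟩
      left_inv := fun k => Subtype.ext ((hmem k.1).1 k.2).1.symm
      right_inv := fun x => Subtype.ext (cyclicLift_zero φ x.1) }

/-- in the cyclic-permutation setting, for `g ∈ G₁` and
`ḡ = (g,1,…,1) ∈ G = G₁ × ⋯ × Gₙ` we have `|C_{G,φ}(ḡ)| = |C_{G₁,ψ₁}(g)|`, where
`C_{H,α}(x) = {h ∈ H : h⁻¹ x α(h) = x}` denotes the twisted centraliser. -/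
theorem card_phiCentraliser_eq_cyclic {n : ℕ} [NeZero n]
    (Gi : Fin n → Type*) [∀ i, Group (Gi i)] [∀ i, Fintype (Gi i)]
    (φi : ∀ i : Fin n, Gi i ≃* Gi (i + 1))
    (φ : MulAut (∀ i, Gi i))
    (hφ : ∀ (g : ∀ i, Gi i) (i : Fin n), φ g (i + 1) = φi i (g i))
    (ψ₁ : MulAut (Gi 0))
    (hψ₁ : ∀ g : ∀ i, Gi i, (φ ^ n) g 0 = ψ₁ (g 0))
    (g : Gi 0) :
    Nat.card {k : ∀ i, Gi i //
        k⁻¹ * Pi.mulSingle 0 g * φ k = Pi.mulSingle 0 g} =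
      Nat.card {k : Gi 0 // k⁻¹ * g * ψ₁ k = g} :=
  card_phiCentraliser_eq_cyclic_general Gi φi φ hφ ψ₁ hψ₁ g
end

section
/- Let G be a finite group, φ ∈ Aut(G) of order m, G̃ = G ⋊ ⟨φ⟩, and V a G̃-module. For an irreducible character χ̃ of G̃, the Molien series satisfies P_{χ̃}^V(t) = (1/m) Σ_{i=0}^{m-1} Σ_{x ∈ H¹(G,φⁱ)} χ̃((x,φⁱ)⁻¹) / (|C_{G,φⁱ}(x)| · det_V(id_V − t·ρ(x,φⁱ))), where the inner sum runs over a set of representatives of the φⁱ-conjugacy classes of G. -/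
open scoped BigOperators Polynomial

/-- The semidirect product `G̃ = G ⋊ ⟨φ⟩`. -/
abbrev Gtilde (G : Type*) [Group G] (φ : MulAut G) :=
  G ⋊[(Subgroup.zpowers φ).subtype] ↥(Subgroup.zpowers φ)

/-- `φ` regarded as an element of `⟨φ⟩`. -/
def phiHat {G : Type*} [Group G] (φ : MulAut G) : ↥(Subgroup.zpowers φ) :=
  ⟨φ, Subgroup.mem_zpowers φ⟩

/-- The reciprocal characteristic power series `det(1 - t·M)⁻¹ ∈ ℂ[[t]]`. -/
noncomputable def invCharPoly {ι : Type*} [Fintype ι] [DecidableEq ι]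
    (M : Matrix ι ι ℂ) : PowerSeries ℂ :=
  (((1 : Matrix ι ι ℂ[X]) - (Polynomial.X : ℂ[X]) • M.map Polynomial.C).det :
      ℂ[X]).toPowerSeries⁻¹

/-- The Molien series `P_χ^V(t) = |G|⁻¹ Σ_g χ(g⁻¹)/det(1 - t·ρ(g))`. -/
noncomputable def molienSeries {G ι : Type*} [Group G] [Fintype G]
    [Fintype ι] [DecidableEq ι]
    (χ : G → ℂ) (ρ : G →* Matrix ι ι ℂ) : PowerSeries ℂ :=
  (Fintype.card G : ℂ)⁻¹ • ∑ g : G, χ g⁻¹ • invCharPoly (ρ g)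

/-- `χ` is an irreducible character of the finite group `G`. -/
def IsIrredChar (G : Type*) [Group G] [Fintype G] (χ : G → ℂ) : Prop :=
  (∃ (k : ℕ) (π : G →* Matrix (Fin k) (Fin k) ℂ), χ = fun s => (π s).trace) ∧
    (Fintype.card G : ℂ)⁻¹ * ∑ s : G, χ s * χ s⁻¹ = 1

/-!
Every summand `χ̃(g⁻¹)/det(1 - t·ρ(g))` of Molien's formula is a class function on `G̃`, and
`G̃` is the disjoint union of the cosets `G·φⁱ`, `i < m`. Conjugating `(x, φⁱ)` by `z ∈ G` gives
`(z x φⁱ(z)⁻¹, φⁱ)`, so on the coset `G·φⁱ` the summand is constant on the orbits of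
`φⁱ`-twisted conjugation, and by orbit–stabilizer the orbit of `x` has `|G| / |C_{G,φⁱ}(x)|`
elements.
-/

open Finset

namespace MulAction

variable {G α : Type*} [Group G] [MulAction G α]

theorem card_orbit_mul_card_stabilizer (x : α) :
    Nat.card (orbit G x) * Nat.card (stabilizer G x) = Nat.card G := by
  rw [← Nat.card_prod, Nat.card_congr (orbitProdStabilizerEquivGroup G x)]

theorem sum_eq_sum_card_orbit_smul [Fintype α] {M : Type*} [AddCommMonoid M]
    (R : Finset α) (hR : ∀ a, ∃! x, x ∈ R ∧ a ∈ orbit G x)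
    (f : α → M) (hf : ∀ (g : G) a, f (g • a) = f a) :
    ∑ a, f a = ∑ x ∈ R, Nat.card (orbit G x) • f x := by
  classical
  choose r hrR hr_orbit using fun a => (hR a).exists
  have hfiber : ∀ x ∈ R, ∀ a, r a = x ↔ a ∈ orbit G x := fun x hx a =>
    ⟨fun h => h ▸ hr_orbit a, fun h => (hR a).unique ⟨hrR a, hr_orbit a⟩ ⟨hx, h⟩⟩
  rw [← sum_fiberwise_of_maps_to (g := r) (fun a _ => hrR a)]
  refine sum_congr rfl fun x hx => ?_
  have hconst : ∀ a ∈ univ.filter (r · = x), f a = f x := by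
    intro a ha
    obtain ⟨g, rfl⟩ := (hfiber x hx a).1 (mem_filter.1 ha).2
    exact hf g x
  rw [sum_congr rfl hconst, sum_const, Nat.card_eq_fintype_card, ← Fintype.card_subtype,
    Fintype.card_congr (Equiv.subtypeEquivRight (hfiber x hx))]

theorem inv_card_smul_sum_eq_sum_inv_card_stabilizer_smul [Fintype α]
    {K M : Type*} [Field K] [CharZero K] [AddCommGroup M] [Module K M]
    (R : Finset α) (hR : ∀ a, ∃! x, x ∈ R ∧ a ∈ orbit G x)
    (f : α → M) (hf : ∀ (g : G) a, f (g • a) = f a) :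
    (Nat.card G : K)⁻¹ • ∑ a, f a = ∑ x ∈ R, (Nat.card (stabilizer G x) : K)⁻¹ • f x := by
  rw [sum_eq_sum_card_orbit_smul R hR f hf, smul_sum]
  refine sum_congr rfl fun x _ => ?_
  have : Nonempty (orbit G x) := ⟨⟨x, mem_orbit_self x⟩⟩
  have horbit : (Nat.card (orbit G x) : K) ≠ 0 := by exact_mod_cast Nat.card_pos.ne'
  rw [← card_orbit_mul_card_stabilizer x, ← Nat.cast_smul_eq_nsmul K, smul_smul, Nat.cast_mul,
    mul_inv_rev, mul_assoc, inv_mul_cancel₀ horbit, mul_one]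

end MulAction

/-- A copy of `G` carrying the `ψ`-twisted conjugation action `z • x = z * x * ψ z⁻¹`. -/
def TwistedConj {G : Type*} [Group G] (_ψ : MulAut G) : Type _ := G

namespace TwistedConj

variable {G : Type*} [Group G] (ψ : MulAut G)

def mk : G ≃ TwistedConj ψ := Equiv.refl G

instance : MulAction G (TwistedConj ψ) where
  smul z x := mk ψ (z * (mk ψ).symm x * ψ z⁻¹)
  one_smul x := by
    change mk ψ (1 * (mk ψ).symm x * ψ 1⁻¹) = x
    simp
  mul_smul z w x := by
    change mk ψ (z * w * (mk ψ).symm x * ψ (z * w)⁻¹) =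
      mk ψ (z * (mk ψ).symm (mk ψ (w * (mk ψ).symm x * ψ w⁻¹)) * ψ z⁻¹)
    simp only [Equiv.symm_apply_apply, mul_inv_rev, map_mul, mul_assoc]

instance [Fintype G] : Fintype (TwistedConj ψ) := Fintype.ofEquiv G (mk ψ)

variable {ψ}

theorem smul_mk (z x : G) : z • mk ψ x = mk ψ (z * x * ψ z⁻¹) := rfl

theorem mk_mem_orbit_iff (x y : G) :
    mk ψ y ∈ MulAction.orbit G (mk ψ x) ↔ ∃ z : G, y = z⁻¹ * x * ψ z := by
  simp only [MulAction.mem_orbit_iff, smul_mk, (mk ψ).apply_eq_iff_eq]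
  exact ⟨fun ⟨z, hz⟩ => ⟨z⁻¹, by simp [← hz]⟩, fun ⟨z, hz⟩ => ⟨z⁻¹, by simp [hz]⟩⟩

theorem card_stabilizer_mk (x : G) :
    Nat.card (MulAction.stabilizer G (mk ψ x)) = Nat.card {g : G // g⁻¹ * x * ψ g = x} := by
  refine Nat.card_congr ((Equiv.inv G).subtypeEquiv fun z => ?_)
  simp [MulAction.mem_stabilizer_iff, smul_mk]

theorem inv_card_smul_sum_eq_sum_inv_card_centralizer_smul [Fintype G]
    {K M : Type*} [Field K] [CharZero K] [AddCommGroup M] [Module K M] (R : Finset G)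
    (hR : ∀ y : G, ∃! x : G, x ∈ R ∧ ∃ z : G, y = z⁻¹ * x * ψ z)
    (f : G → M) (hf : ∀ z x : G, f (z * x * ψ z⁻¹) = f x) :
    (Fintype.card G : K)⁻¹ • ∑ y, f y =
      ∑ x ∈ R, (Nat.card {g : G // g⁻¹ * x * ψ g = x} : K)⁻¹ • f x := by
  have hR' : ∀ a : TwistedConj ψ,
      ∃! x, x ∈ R.map (mk ψ).toEmbedding ∧ a ∈ MulAction.orbit G x := by
    intro a
    obtain ⟨y, rfl⟩ := (mk ψ).surjective a
    obtain ⟨x, hx, huniq⟩ := hR y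
    refine ⟨mk ψ x, ?_, fun x' hx' => ?_⟩
    · simpa only [mem_map_equiv, Equiv.symm_apply_apply, mk_mem_orbit_iff] using hx
    · obtain ⟨x', rfl⟩ := (mk ψ).surjective x'
      simp only [mem_map_equiv, Equiv.symm_apply_apply, mk_mem_orbit_iff] at hx'
      rw [huniq x' hx']
  have hsum := MulAction.inv_card_smul_sum_eq_sum_inv_card_stabilizer_smul (K := K) (G := G)
    (R.map (mk ψ).toEmbedding) hR' (fun a => f ((mk ψ).symm a)) (fun z a => by
      obtain ⟨x, rfl⟩ := (mk ψ).surjective a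
      simpa [smul_mk] using hf z x)
  simp only [sum_map, Equiv.coe_toEmbedding, Equiv.symm_apply_apply, card_stabilizer_mk,
    Nat.card_eq_fintype_card] at hsum
  rwa [Equiv.sum_comp] at hsum

end TwistedConj

namespace SemidirectProduct

variable {N H : Type*} [Group N] [Group H] {φ : H →* MulAut N}

theorem inl_mul_mk_mul_inv_inl (z n : N) (h : H) :
    inl z * (⟨n, h⟩ : N ⋊[φ] H) * (inl z)⁻¹ = ⟨z * n * φ h z⁻¹, h⟩ := by
  ext <;> simp

theorem sum_eq_sum_sum {M : Type*} [AddCommMonoid M] [Fintype (N ⋊[φ] H)] [Fintype N]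
    [Fintype H] (f : N ⋊[φ] H → M) : ∑ g, f g = ∑ h : H, ∑ n : N, f ⟨n, h⟩ := by
  rw [Fintype.sum_equiv equivProd f (fun p => f ⟨p.1, p.2⟩) (fun _ => rfl),
    Fintype.sum_prod_type, Finset.sum_comm]

theorem card_eq_card_mul_card [Fintype (N ⋊[φ] H)] [Fintype N] [Fintype H] :
    Fintype.card (N ⋊[φ] H) = Fintype.card N * Fintype.card H := by
  rw [Fintype.card_congr equivProd, Fintype.card_prod]

end SemidirectProduct

theorem IsOfFinOrder.sum_zpowers {G M : Type*} [Group G] [AddCommMonoid M] {x : G}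
    (hx : IsOfFinOrder x) [Fintype (Subgroup.zpowers x)] (f : Subgroup.zpowers x → M) :
    ∑ a, f a = ∑ i ∈ range (orderOf x), f (⟨x, Subgroup.mem_zpowers x⟩ ^ i) := by
  rw [← Fin.sum_univ_eq_sum_range fun i => f (⟨x, Subgroup.mem_zpowers x⟩ ^ i)]
  exact (Fintype.sum_equiv (finEquivZPowers hx) _ f fun i =>
    congrArg f (Subtype.ext (by simp [finEquivZPowers_apply]))).symm

theorem Matrix.charpolyRev_mul_mul_of_mul_eq_one {n R : Type*} [Fintype n] [DecidableEq n]
    [CommRing R] {P Q : Matrix n n R} (hQP : Q * P = 1) (M : Matrix n n R) :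
    (P * M * Q).charpolyRev = M.charpolyRev := by
  rw [← reverse_charpoly, ← reverse_charpoly, charpoly_mul_comm, ← Matrix.mul_assoc, hQP,
    Matrix.one_mul]

theorem invCharPoly_map_conj {ι H : Type*} [Fintype ι] [DecidableEq ι] [Group H]
    (ρ : H →* Matrix ι ι ℂ) (h g : H) : invCharPoly (ρ (h * g * h⁻¹)) = invCharPoly (ρ g) := by
  have hinv : ρ h⁻¹ * ρ h = 1 := by rw [← map_mul, inv_mul_cancel, map_one]
  change (ρ (h * g * h⁻¹)).charpolyRev.toPowerSeries⁻¹ = (ρ g).charpolyRev.toPowerSeries⁻¹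
  rw [map_mul, map_mul, Matrix.charpolyRev_mul_mul_of_mul_eq_one hinv]

theorem IsIrredChar.map_conj {H : Type*} [Group H] [Fintype H] {χ : H → ℂ}
    (hχ : IsIrredChar H χ) (h g : H) : χ (h * g * h⁻¹) = χ g := by
  obtain ⟨⟨k, π, rfl⟩, -⟩ := hχ
  dsimp only
  rw [map_mul, map_mul, Matrix.trace_mul_cycle, ← map_mul, inv_mul_cancel, map_one, Matrix.one_mul]

theorem molienSeries_coset_decomposition_general {G ι : Type*} [Group G] [Fintype G]
    [Fintype ι] [DecidableEq ι]
    (φ : MulAut G) [Fintype (Gtilde G φ)]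
    (m : ℕ) (hm : orderOf φ = m)
    (cht : Gtilde G φ → ℂ) (hcht : IsIrredChar (Gtilde G φ) cht)
    (ρ : Gtilde G φ →* Matrix ι ι ℂ)
    (R : ℕ → Finset G)
    (hR : ∀ i < m, ∀ y : G, ∃! x : G, x ∈ R i ∧ ∃ z : G, y = z⁻¹ * x * (φ ^ i) z) :
    molienSeries cht ρ =
      (m : ℂ)⁻¹ • ∑ i ∈ Finset.range m, ∑ x ∈ R i,
        (cht ((⟨x, phiHat φ ^ i⟩ : Gtilde G φ)⁻¹) *
            (Nat.card {g : G // g⁻¹ * x * (φ ^ i) g = x} : ℂ)⁻¹) •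
          invCharPoly (ρ ⟨x, phiHat φ ^ i⟩) := by
  subst hm
  let F : Gtilde G φ → PowerSeries ℂ := fun g => cht g⁻¹ • invCharPoly (ρ g)
  have hF : ∀ h g, F (h * g * h⁻¹) = F g := fun h g => by
    simp only [F, show (h * g * h⁻¹)⁻¹ = h * g⁻¹ * h⁻¹ by group, hcht.map_conj,
      invCharPoly_map_conj]
  have hcoset : ∀ i < orderOf φ, (Fintype.card G : ℂ)⁻¹ • ∑ a : G, F ⟨a, phiHat φ ^ i⟩ =
      ∑ x ∈ R i, (Nat.card {g : G // g⁻¹ * x * (φ ^ i) g = x} : ℂ)⁻¹ • F ⟨x, phiHat φ ^ i⟩ := by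
    refine fun i hi => TwistedConj.inv_card_smul_sum_eq_sum_inv_card_centralizer_smul _
      (hR i hi) _ fun z x => ?_
    have := hF (SemidirectProduct.inl z) ⟨x, phiHat φ ^ i⟩
    rwa [SemidirectProduct.inl_mul_mk_mul_inv_inl] at this
  have : Fintype (Subgroup.zpowers φ) := Fintype.ofFinite _
  calc molienSeries cht ρ
      = ((Fintype.card G : ℂ) * orderOf φ)⁻¹ •
          ∑ i ∈ range (orderOf φ), ∑ a : G, F ⟨a, phiHat φ ^ i⟩ := by
        rw [molienSeries, SemidirectProduct.card_eq_card_mul_card, ← Nat.card_eq_fintype_card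
          (α := Subgroup.zpowers φ), Nat.card_zpowers, SemidirectProduct.sum_eq_sum_sum,
          (isOfFinOrder_of_finite φ).sum_zpowers, Nat.cast_mul]
        rfl
    _ = _ := by
        rw [mul_inv, mul_comm, mul_smul, smul_sum,
          sum_congr rfl fun i hi => hcoset i (mem_range.1 hi)]
        simp only [F, smul_smul, mul_comm]

/-- the Molien series of an irreducible character `χ̃` of
`G̃ = G ⋊ ⟨φ⟩` (with `φ` of order `m`) decomposes along the cosets `G.φⁱ` as
`P_{χ̃}^V(t) = m⁻¹ Σ_{i<m} Σ_{x ∈ H¹(G,φⁱ)} χ̃((x,φⁱ)⁻¹)/(|C_{G,φⁱ}(x)|·det(1−tρ(x,φⁱ)))`,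
where for each `i` the finite set `R i` is a set of representatives for the
φⁱ-conjugacy classes of `G`. -/
theorem molienSeries_coset_decomposition {G ι : Type*} [Group G] [Fintype G]
    [Fintype ι] [DecidableEq ι]
    (φ : MulAut G) [Fintype (Gtilde G φ)]
    (m : ℕ) (hm : orderOf φ = m) (hm0 : 0 < m)
    (cht : Gtilde G φ → ℂ) (hcht : IsIrredChar (Gtilde G φ) cht)
    (ρ : Gtilde G φ →* Matrix ι ι ℂ)
    (R : ℕ → Finset G)
    (hR : ∀ i < m, ∀ y : G, ∃! x : G, x ∈ R i ∧ ∃ z : G, y = z⁻¹ * x * (φ ^ i) z) :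
    molienSeries cht ρ =
      (m : ℂ)⁻¹ • ∑ i ∈ Finset.range m, ∑ x ∈ R i,
        (cht ((⟨x, phiHat φ ^ i⟩ : Gtilde G φ)⁻¹) *
            (Nat.card {g : G // g⁻¹ * x * (φ ^ i) g = x} : ℂ)⁻¹) •
          invCharPoly (ρ ⟨x, phiHat φ ^ i⟩) :=
  molienSeries_coset_decomposition_general φ m hm cht hcht ρ R hR
end

section
/- Let G = G₁ × ⋯ × Gₙ with cyclic-permutation automorphism φ built from isomorphisms φᵢ : Gᵢ → G_{i+1}, and let V = V₁ ⊕ ⋯ ⊕ Vₙ be a G-module where Gᵢ acts faithfully-nontrivially only on Vᵢ (V = Vᵢ ⊕ Fix_{Gᵢ}(V)), equipped with a compatible linear map σ cyclically permuting the summands as in the paper. For x ∈ G₁ and x̄ = (x,1,…,1), the characteristic-polynomial identity det_V(id_V − t·ρ(x̄,φ)) = det_{V₁}(id_{V₁} − tⁿ·ρ₁(x, ψ₁)) holds, where ψ₁ is the composite automorphism of G₁ and ρ₁(x,ψ₁) = ρ₁(x)∘τ₁ with τ₁ the induced twisting map on V₁. -/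
open scoped BigOperators Polynomial

/-!
Let `N` be the block matrix sending block `j` to block `j + 1` through `B j`. Adding
`B (n-1) * ⋯ * B j` times block row `j` of `1 - N` to block row `0`, for every `j ≠ 0`, clears
block row `0` except for its diagonal block, which becomes `1 - B (n-1) * ⋯ * B 0`. The result
is that block diagonal matrix times `1 - N'`, where `N'` is `N` without its wrap-around block, and
`1 - N'` is unipotent block-triangular. So `det (1 - N) = det (1 - B (n-1) * ⋯ * B 0)` over any
commutative ring.

The matrix `ρ(x̄, φ) = ρ(x̄) ρ(1, φ)` has this shape with `B j = ρ_{j+1}(x̄_{j+1}) σ_j`. Since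
`x̄ᵢ = 1` for `i ≠ 0`, the cycle product of the `t • B j` is `tⁿ ρ₁(x) τ₁`.
-/

namespace Fin

variable {n : ℕ} [NeZero n]

theorem val_add_one_eq_ite (j : Fin n) :
    ((j + 1 : Fin n) : ℕ) = if (j : ℕ) + 1 = n then 0 else (j : ℕ) + 1 := by
  rw [Fin.val_add, Fin.val_one', Nat.add_mod_mod]
  split_ifs with h
  · rw [h, Nat.mod_self]
  · exact Nat.mod_eq_of_lt (by omega)

theorem add_one_eq_zero_iff (j : Fin n) : j + 1 = 0 ↔ (j : ℕ) + 1 = n := by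
  rw [Fin.ext_iff, val_add_one_eq_ite]
  split_ifs with h <;> simp [h]

end Fin

section CycleProd

variable {M : Type*} [Monoid M] {n : ℕ}

def cycleProd (B : Fin n → M) : M := (List.ofFn B).reverse.prod

def cycleSuffixProd (B : Fin n → M) (k : ℕ) : M := ((List.ofFn B).drop k).reverse.prod

theorem cycleSuffixProd_zero (B : Fin n → M) : cycleSuffixProd B 0 = cycleProd B := rfl

theorem cycleSuffixProd_of_le (B : Fin n → M) {k : ℕ} (hk : n ≤ k) :
    cycleSuffixProd B k = 1 := by
  simp [cycleSuffixProd, List.drop_eq_nil_of_le, hk]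

theorem cycleSuffixProd_eq_succ_mul (B : Fin n → M) (j : Fin n) :
    cycleSuffixProd B j = cycleSuffixProd B ((j : ℕ) + 1) * B j := by
  rw [cycleSuffixProd, List.drop_eq_getElem_cons (by simp)]
  simp [cycleSuffixProd]

theorem cycleProd_smul {S : Type*} [Monoid S] [MulAction S M] [IsScalarTower S M M]
    [SMulCommClass S M M] (c : S) (B : Fin n → M) :
    cycleProd (fun j => c • B j) = c ^ n • cycleProd B := by
  simpa [cycleProd, List.map_reverse, List.map_ofFn, Function.comp_def] using
    (List.smul_prod (List.ofFn B).reverse c).symm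

theorem map_cycleProd {F N : Type*} [Monoid N] [FunLike F M N] [MonoidHomClass F M N] (f : F)
    (B : Fin n → M) : f (cycleProd B) = cycleProd fun j => f (B j) := by
  rw [cycleProd, cycleProd, map_list_prod, List.map_reverse, List.map_ofFn]
  rfl

theorem cycleProd_mulSingle_mul [NeZero n] (a : M) (B : Fin n → M) :
    cycleProd (fun j => (Pi.mulSingle 0 a : Fin n → M) (j + 1) * B j) = a * cycleProd B := by
  obtain ⟨k, rfl⟩ : ∃ k, n = k + 1 := Nat.exists_eq_succ_of_ne_zero (NeZero.ne n)
  have hinit (i : Fin k) : (i.castSucc + 1 : Fin (k + 1)) ≠ 0 := by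
    rw [Fin.coeSucc_eq_succ]
    exact Fin.succ_ne_zero i
  rw [cycleProd, cycleProd, List.ofFn_succ', List.ofFn_succ']
  simp only [List.concat_eq_append, List.reverse_append, List.reverse_singleton,
    List.singleton_append, List.prod_cons, Fin.last_add_one, Pi.mulSingle_eq_same, mul_assoc,
    Pi.mulSingle_eq_of_ne (hinit _), one_mul]

end CycleProd

namespace Matrix

variable {ι R : Type*}

theorem map_cycleProd {S : Type*} [Fintype ι] [DecidableEq ι] [Semiring R] [Semiring S]
    {n : ℕ} (f : R →+* S) (B : Fin n → Matrix ι ι R) :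
    (cycleProd B).map f = cycleProd fun j => (B j).map f :=
  _root_.map_cycleProd f.mapMatrix B

theorem BlockTriangular.det_eq_one {m α : Type*} [CommRing R] [Fintype m] [DecidableEq m]
    [LinearOrder α] {M : Matrix m m R} {b : m → α} (hM : M.BlockTriangular b)
    (hdiag : ∀ i j, b i = b j → M i j = (1 : Matrix m m R) i j) : M.det = 1 := by
  rw [hM.det]
  refine Finset.prod_eq_one fun a _ => ?_
  have hblock : M.toSquareBlock b a = 1 := by
    ext i j
    rw [toSquareBlock_def, of_apply, hdiag _ _ (i.2.trans j.2.symm), one_apply, one_apply]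
    exact if_congr Subtype.ext_iff.symm rfl rfl
  rw [hblock, det_one]

variable {n : ℕ} [NeZero n]

def cyclicBlockShift [Zero R] (B : Fin n → Matrix ι ι R) : Matrix (ι × Fin n) (ι × Fin n) R :=
  of fun q r => if q.2 = r.2 + 1 then B r.2 q.1 r.1 else 0

theorem cyclicBlockShift_map {S : Type*} [Zero R] [Zero S] (f : R → S) (hf : f 0 = 0)
    (B : Fin n → Matrix ι ι R) :
    (cyclicBlockShift B).map f = cyclicBlockShift fun j => (B j).map f := by
  ext q r
  simp only [map_apply, cyclicBlockShift, of_apply, apply_ite f, hf]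

theorem smul_cyclicBlockShift {S : Type*} [Zero R] [SMulZeroClass S R] (c : S)
    (B : Fin n → Matrix ι ι R) :
    c • cyclicBlockShift B = cyclicBlockShift fun j => c • B j := by
  ext q r
  simp only [smul_apply, cyclicBlockShift, of_apply, smul_ite, smul_zero]

def chainBlockShift [Zero R] (B : Fin n → Matrix ι ι R) : Matrix (ι × Fin n) (ι × Fin n) R :=
  cyclicBlockShift fun j => if j + 1 = 0 then 0 else B j

theorem chainBlockShift_apply_zero [Zero R] (B : Fin n → Matrix ι ι R) (a : ι)
    (r : ι × Fin n) : chainBlockShift B (a, 0) r = 0 := by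
  simp +contextual [chainBlockShift, cyclicBlockShift, eq_comm (a := (0 : Fin n))]

theorem chainBlockShift_apply_of_ne_zero [Zero R] (B : Fin n → Matrix ι ι R)
    {q : ι × Fin n} (hq : q.2 ≠ 0) (r : ι × Fin n) :
    chainBlockShift B q r = cyclicBlockShift B q r := by
  simp only [chainBlockShift, cyclicBlockShift, of_apply]
  split_ifs with h h'
  · exact absurd (h.trans h') hq
  all_goals rfl

theorem lt_of_chainBlockShift_apply_ne_zero [Zero R] {B : Fin n → Matrix ι ι R}
    {i j : ι × Fin n} (h : chainBlockShift B i j ≠ 0) : j.2 < i.2 := by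
  simp only [chainBlockShift, cyclicBlockShift, of_apply] at h
  split_ifs at h with hij hj <;> try exact absurd rfl h
  rw [hij, Fin.lt_def, Fin.val_add_one_eq_ite, if_neg (mt (Fin.add_one_eq_zero_iff _).2 hj)]
  exact Nat.lt_succ_self _

theorem blockDiagonal_mulSingle_apply_of_ne_zero [DecidableEq ι] [Zero R] [One R]
    (A : Matrix ι ι R) {q : ι × Fin n} (hq : q.2 ≠ 0) (r : ι × Fin n) :
    blockDiagonal (Pi.mulSingle 0 A) q r = (1 : Matrix (ι × Fin n) (ι × Fin n) R) q r := by
  rw [← blockDiagonal_one, blockDiagonal_apply, blockDiagonal_apply, Pi.mulSingle_eq_of_ne hq,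
    Pi.one_apply]

section Semiring

variable [Fintype ι] [NonUnitalNonAssocSemiring R]

theorem mul_cyclicBlockShift_apply {κ : Type*} (M : Matrix κ (ι × Fin n) R)
    (B : Fin n → Matrix ι ι R) (q : κ) (r : ι × Fin n) :
    (M * cyclicBlockShift B) q r = ∑ a, M q (a, r.2 + 1) * B r.2 a r.1 := by
  simp [mul_apply, Fintype.sum_prod_type, cyclicBlockShift]

theorem blockDiagonal_mul_cyclicBlockShift (d B : Fin n → Matrix ι ι R) :
    blockDiagonal d * cyclicBlockShift B = cyclicBlockShift fun j => d (j + 1) * B j := by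
  ext q r
  rw [mul_cyclicBlockShift_apply]
  by_cases h : q.2 = r.2 + 1
  · simp [blockDiagonal_apply, cyclicBlockShift, h, mul_apply]
  · simp [blockDiagonal_apply, cyclicBlockShift, h]

end Semiring

section CommRing

variable [Fintype ι] [DecidableEq ι] [CommRing R]

theorem blockDiagonal_mulSingle_mul_chainBlockShift (A : Matrix ι ι R)
    (B : Fin n → Matrix ι ι R) :
    blockDiagonal (Pi.mulSingle 0 A) * chainBlockShift B = chainBlockShift B := by
  rw [chainBlockShift, blockDiagonal_mul_cyclicBlockShift]
  congr 1
  funext j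
  split_ifs with h
  · rw [mul_zero]
  · rw [Pi.mulSingle_eq_of_ne h, one_mul]

theorem det_one_sub_chainBlockShift (B : Fin n → Matrix ι ι R) :
    (1 - chainBlockShift B).det = 1 := by
  refine BlockTriangular.det_eq_one (b := fun q => OrderDual.toDual q.2)
    (blockTriangular_one.sub fun i j hij => ?_) (fun i j hij => ?_)
  · by_contra h
    exact (lt_of_chainBlockShift_apply_ne_zero h).not_gt hij
  · rw [sub_apply, sub_eq_self]
    by_contra h
    exact (lt_of_chainBlockShift_apply_ne_zero h).ne (OrderDual.toDual.injective hij).symm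

def cyclicBlockShiftReduction (B : Fin n → Matrix ι ι R) : Matrix (ι × Fin n) (ι × Fin n) R :=
  of fun q r => if q.2 = 0 ∧ r.2 ≠ 0 then cycleSuffixProd B r.2 q.1 r.1
    else (1 : Matrix (ι × Fin n) (ι × Fin n) R) q r

theorem cyclicBlockShiftReduction_apply_of_ne_zero (B : Fin n → Matrix ι ι R)
    {q : ι × Fin n} (hq : q.2 ≠ 0) (r : ι × Fin n) :
    cyclicBlockShiftReduction B q r = (1 : Matrix (ι × Fin n) (ι × Fin n) R) q r := by
  simp [cyclicBlockShiftReduction, hq]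

theorem cyclicBlockShiftReduction_mul_apply_of_ne_zero (B : Fin n → Matrix ι ι R)
    (M : Matrix (ι × Fin n) (ι × Fin n) R) {q : ι × Fin n} (hq : q.2 ≠ 0) (r : ι × Fin n) :
    (cyclicBlockShiftReduction B * M) q r = M q r := by
  simp_rw [mul_apply, cyclicBlockShiftReduction_apply_of_ne_zero B hq, ← mul_apply, one_mul]

theorem cyclicBlockShiftReduction_apply_zero_add_one (B : Fin n → Matrix ι ι R) (a b : ι)
    (j : Fin n) :
    cyclicBlockShiftReduction B (a, 0) (b, j + 1) = cycleSuffixProd B ((j : ℕ) + 1) a b := by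
  by_cases hj : (j : ℕ) + 1 = n
  · have hj0 : j + 1 = 0 := (Fin.add_one_eq_zero_iff j).2 hj
    simp [cyclicBlockShiftReduction, hj0, hj, cycleSuffixProd_of_le, one_apply]
  · have hj0 : j + 1 ≠ 0 := mt (Fin.add_one_eq_zero_iff j).1 hj
    simp [cyclicBlockShiftReduction, hj0, Fin.val_add_one_eq_ite, hj]

theorem det_cyclicBlockShiftReduction (B : Fin n → Matrix ι ι R) :
    (cyclicBlockShiftReduction B).det = 1 := by
  refine BlockTriangular.det_eq_one (b := Prod.snd) (fun i j hji => ?_) (fun i j hij => ?_)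
  · have hi : i.2 ≠ 0 := (lt_of_le_of_lt (Fin.zero_le _) hji).ne'
    simp [cyclicBlockShiftReduction, hi, one_apply, Prod.ext_iff, hji.ne']
  · simp [cyclicBlockShiftReduction, hij]

theorem cyclicBlockShiftReduction_mul_one_sub (B : Fin n → Matrix ι ι R) :
    cyclicBlockShiftReduction B * (1 - cyclicBlockShift B) =
      blockDiagonal (Pi.mulSingle 0 (1 - cycleProd B)) * (1 - chainBlockShift B) := by
  rw [mul_sub, mul_sub, mul_one, mul_one, blockDiagonal_mulSingle_mul_chainBlockShift]
  ext ⟨a, k⟩ ⟨b, l⟩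
  rw [sub_apply, sub_apply]
  by_cases hk : k = 0
  · subst hk
    rw [mul_cyclicBlockShift_apply]
    simp only [cyclicBlockShiftReduction_apply_zero_add_one]
    rw [← mul_apply, ← cycleSuffixProd_eq_succ_mul, chainBlockShift_apply_zero, sub_zero,
      blockDiagonal_apply']
    by_cases hl : l = 0
    · subst hl
      simp [cyclicBlockShiftReduction, cycleSuffixProd_zero, one_apply]
    · simp [cyclicBlockShiftReduction, hl, Ne.symm hl]
  · rw [cyclicBlockShiftReduction_apply_of_ne_zero (q := (a, k)) _ hk,
      cyclicBlockShiftReduction_mul_apply_of_ne_zero (q := (a, k)) _ _ hk,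
      blockDiagonal_mulSingle_apply_of_ne_zero (q := (a, k)) _ hk,
      chainBlockShift_apply_of_ne_zero (q := (a, k)) _ hk]

theorem det_one_sub_cyclicBlockShift (B : Fin n → Matrix ι ι R) :
    (1 - cyclicBlockShift B).det = (1 - cycleProd B).det := by
  have h := congrArg det (cyclicBlockShiftReduction_mul_one_sub B)
  rwa [det_mul, det_mul, det_cyclicBlockShiftReduction, det_one_sub_chainBlockShift, one_mul,
    mul_one, det_blockDiagonal, Fintype.prod_eq_single 0 fun k hk => by
      rw [Pi.mulSingle_eq_of_ne hk, det_one], Pi.mulSingle_eq_same] at h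

end CommRing

end Matrix

theorem charpoly_cyclic_reduction_general {n m : ℕ} [NeZero n]
    (Gi : Fin n → Type*) [∀ i, Group (Gi i)]
    (φ : MulAut (∀ i, Gi i))
    (ρt : Gtilde (∀ i, Gi i) φ →* Matrix (Fin m × Fin n) (Fin m × Fin n) ℂ)
    (ρi : ∀ i : Fin n, Gi i → Matrix (Fin m) (Fin m) ℂ)
    (hinl : ∀ g : ∀ i, Gi i,
      ρt (SemidirectProduct.inl g) = Matrix.blockDiagonal (fun i => ρi i (g i)))
    (Sb : Fin n → Matrix (Fin m) (Fin m) ℂ)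
    (hS : ∀ q r : Fin m × Fin n,
      ρt ⟨1, phiHat φ⟩ q r = if q.2 = r.2 + 1 then Sb r.2 q.1 r.1 else 0)
    (x : Gi 0) :
    ((1 : Matrix (Fin m × Fin n) (Fin m × Fin n) ℂ[X]) -
        (Polynomial.X : ℂ[X]) •
          (ρt ⟨Pi.mulSingle 0 x, phiHat φ⟩).map Polynomial.C).det =
      ((1 : Matrix (Fin m) (Fin m) ℂ[X]) -
        ((Polynomial.X : ℂ[X]) ^ n) •
          (ρi 0 x * (List.ofFn Sb).reverse.prod).map Polynomial.C).det := by
  have hone : (fun i => ρi i 1) = 1 := Matrix.blockDiagonal_injective <| by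
    rw [Matrix.blockDiagonal_one, ← map_one ρt, ← map_one SemidirectProduct.inl, hinl]
    rfl
  have hx : (fun i => ρi i (Pi.mulSingle 0 x i)) = Pi.mulSingle 0 (ρi 0 x) := by
    funext i
    by_cases hi : i = 0
    · subst hi
      simp
    · simp [hi, congrFun hone i]
  have hsplit : (⟨Pi.mulSingle 0 x, phiHat φ⟩ : Gtilde (∀ i, Gi i) φ) =
      SemidirectProduct.inl (Pi.mulSingle 0 x) * ⟨1, phiHat φ⟩ := by
    ext <;> simp
  have hshift : ρt ⟨1, phiHat φ⟩ = Matrix.cyclicBlockShift Sb := Matrix.ext hS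
  rw [hsplit, map_mul, hinl, hshift, hx, Matrix.blockDiagonal_mul_cyclicBlockShift,
    Matrix.cyclicBlockShift_map _ (map_zero Polynomial.C), Matrix.smul_cyclicBlockShift,
    Matrix.det_one_sub_cyclicBlockShift, cycleProd_smul, ← Matrix.map_cycleProd,
    cycleProd_mulSingle_mul]
  rfl

/-- in the cyclic setting `G = G₁ × ⋯ × Gₙ`, `V = V₁ ⊕ ⋯ ⊕ Vₙ`
(each `Vᵢ` of dimension `m`, coordinates indexed by `Fin m × Fin n` with `Gᵢ`
acting block-diagonally only on `Vᵢ`, and the extended action of `(1,φ)` given by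
the cyclic shift built from the blocks `Sb i : Vᵢ → V_{i+1}` of `σ`), for `x ∈ G₁`
and `x̄ = (x,1,…,1)` one has
`det_V(1 − t·ρ(x̄,φ)) = det_{V₁}(1 − tⁿ·ρ₁(x)∘τ₁)` where
`τ₁ = σₙ⋯σ₁ = Sb_{n-1}⋯Sb_0` is the around-the-cycle composite on `V₁`. -/
theorem charpoly_cyclic_reduction {n m : ℕ} [NeZero n]
    (Gi : Fin n → Type*) [∀ i, Group (Gi i)] [∀ i, Fintype (Gi i)]
    (φi : ∀ i : Fin n, Gi i ≃* Gi (i + 1))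
    (φ : MulAut (∀ i, Gi i))
    (hφ : ∀ (g : ∀ i, Gi i) (i : Fin n), φ g (i + 1) = φi i (g i))
    (ψ₁ : MulAut (Gi 0))
    (hψ₁ : ∀ g : ∀ i, Gi i, (φ ^ n) g 0 = ψ₁ (g 0))
    [Fintype (Gtilde (∀ i, Gi i) φ)]
    (ρt : Gtilde (∀ i, Gi i) φ →* Matrix (Fin m × Fin n) (Fin m × Fin n) ℂ)
    (ρi : ∀ i : Fin n, Gi i → Matrix (Fin m) (Fin m) ℂ)
    (hinl : ∀ g : ∀ i, Gi i,
      ρt (SemidirectProduct.inl g) = Matrix.blockDiagonal (fun i => ρi i (g i)))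
    (Sb : Fin n → Matrix (Fin m) (Fin m) ℂ)
    (hS : ∀ q r : Fin m × Fin n,
      ρt ⟨1, phiHat φ⟩ q r = if q.2 = r.2 + 1 then Sb r.2 q.1 r.1 else 0)
    (x : Gi 0) :
    ((1 : Matrix (Fin m × Fin n) (Fin m × Fin n) ℂ[X]) -
        (Polynomial.X : ℂ[X]) •
          (ρt ⟨Pi.mulSingle 0 x, phiHat φ⟩).map Polynomial.C).det =
      ((1 : Matrix (Fin m) (Fin m) ℂ[X]) -
        ((Polynomial.X : ℂ[X]) ^ n) •
          (ρi 0 x * (List.ofFn Sb).reverse.prod).map Polynomial.C).det :=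
  charpoly_cyclic_reduction_general Gi φ ρt ρi hinl Sb hS x
end

section
/- Let A and B be m×m matrices over a commutative ring and t a scalar (or indeterminate). Consider the nm×nm block matrix M with identity blocks I_m on the diagonal, block −t·AB in position (1,2), blocks −t·B in positions (2,3), (3,4), …, (n−1,n), block −t·B in position (n,1), and zeros elsewhere. Then det(M) = det(I_m − tⁿ·A Bⁿ). -/
/-!
Split the cyclic block matrix as `1 - N - X Y`, where `N` carries the blocks `C₀, …, C_{n-2}`
above the diagonal, `X` is the last block column holding `C_{n-1}` and `Y` picks out the first
block. The column `Z` of tail products `C_p ⋯ C_{n-1}` solves `(1 - N) Z = X`, so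
`1 - N - X Y = (1 - N)(1 - Z Y)`. The first factor is block unitriangular, and Sylvester's identity
gives `det (1 - Z Y) = det (1 - Y Z) = det (1 - C₀ ⋯ C_{n-1})`.
-/

open Matrix

theorem Fin.eq_add_one_iff {n : ℕ} [NeZero n] (p q : Fin n) :
    q = p + 1 ↔ (q : ℕ) = p + 1 ∨ ((p : ℕ) + 1 = n ∧ (q : ℕ) = 0) := by
  obtain ⟨k, rfl⟩ := Nat.exists_eq_succ_of_ne_zero (NeZero.ne n)
  rw [Fin.ext_iff, Fin.val_add_one]
  split_ifs with h <;> simp [Fin.ext_iff] at h <;> omega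

theorem Fin.add_one_ne_self {n : ℕ} [NeZero n] (hn : 2 ≤ n) (p : Fin n) : p + 1 ≠ p := by
  obtain ⟨k, rfl⟩ := Nat.exists_eq_succ_of_ne_zero (NeZero.ne n)
  rw [Ne, Fin.ext_iff, Fin.val_add_one]
  split_ifs with h
  · rw [h, Fin.val_last]; omega
  · omega

theorem List.prod_drop_ofFn {M : Type*} [Monoid M] {n : ℕ} (f : Fin n → M) (p : Fin n) :
    ((List.ofFn f).drop p).prod = f p * ((List.ofFn f).drop (p + 1)).prod := by
  rw [List.drop_eq_getElem_cons (by simp), List.prod_cons, List.getElem_ofFn]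

theorem List.prod_ofFn_ite_zero {M : Type*} [Monoid M] (k : ℕ) (x y : M) :
    (List.ofFn fun p : Fin (k + 1) => if p = 0 then x else y).prod = x * y ^ k := by
  simp [List.ofFn_succ, Fin.succ_ne_zero, List.ofFn_const, List.prod_replicate]

def cyclicBlockMatrix {n : ℕ} [NeZero n] {ι R : Type*} [Zero R] (C : Fin n → Matrix ι ι R) :
    Matrix (Fin n × ι) (Fin n × ι) R :=
  of fun p q => if q.1 = p.1 + 1 then C p.1 p.2 q.2 else 0

def superdiagBlockMatrix {n : ℕ} {ι R : Type*} [Zero R] (C : Fin n → Matrix ι ι R) :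
    Matrix (Fin n × ι) (Fin n × ι) R :=
  of fun p q => if (q.1 : ℕ) = p.1 + 1 then C p.1 p.2 q.2 else 0

def lastBlockColumn {n : ℕ} {ι R : Type*} [Zero R] (C : Fin n → Matrix ι ι R) :
    Matrix (Fin n × ι) ι R :=
  of fun p j => if (p.1 : ℕ) + 1 = n then C p.1 p.2 j else 0

/- `ι` and `R` are explicit: with them implicit, `X * firstBlockRow n` elaborates with the
`CStarMatrix` default `HMul` instance. -/
def firstBlockRow (n : ℕ) (ι R : Type*) [DecidableEq ι] [Zero R] [One R] :
    Matrix ι (Fin n × ι) R :=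
  of fun i q => if (q.1 : ℕ) = 0 then (1 : Matrix ι ι R) i q.2 else 0

def tailProdColumn {n : ℕ} {ι R : Type*} [Fintype ι] [DecidableEq ι] [Semiring R]
    (C : Fin n → Matrix ι ι R) : Matrix (Fin n × ι) ι R :=
  of fun p => ((List.ofFn C).drop p.1).prod p.2

section CyclicBlockMatrix

variable {n : ℕ} {ι : Type*} [Fintype ι] [DecidableEq ι] {R : Type*} [CommRing R]

theorem cyclicBlockMatrix_eq_superdiag_add [NeZero n] (C : Fin n → Matrix ι ι R) :
    cyclicBlockMatrix C = superdiagBlockMatrix C + lastBlockColumn C * firstBlockRow n ι R := by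
  ext ⟨p, i⟩ ⟨q, j⟩
  simp only [cyclicBlockMatrix, superdiagBlockMatrix, lastBlockColumn, firstBlockRow,
    Matrix.add_apply, mul_apply, of_apply, mul_ite, mul_zero, mul_one, one_apply,
    Finset.sum_ite_irrel, Finset.sum_const_zero, Finset.sum_ite_eq', Finset.mem_univ, if_true,
    Fin.eq_add_one_iff]
  split_ifs <;> (try simp) <;> omega

theorem det_one_sub_superdiagBlockMatrix (C : Fin n → Matrix ι ι R) :
    (1 - superdiagBlockMatrix C).det = 1 := by
  have htri : (1 - superdiagBlockMatrix C).BlockTriangular Prod.fst := by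
    intro p q h
    have : (q.1 : ℕ) ≠ p.1 + 1 := by have : q.1 < p.1 := h; omega
    simp [superdiagBlockMatrix, this, one_apply, Prod.ext_iff, h.ne']
  rw [htri.det_fintype]
  refine Finset.prod_eq_one fun k _ => ?_
  suffices (1 - superdiagBlockMatrix C).toSquareBlock Prod.fst k = 1 by rw [this, det_one]
  ext ⟨a, ha⟩ ⟨b, hb⟩
  have hab : b.1 = a.1 := hb.trans ha.symm
  simp [toSquareBlock_def, superdiagBlockMatrix, one_apply, hab]

theorem one_sub_superdiagBlockMatrix_mul_tailProdColumn (C : Fin n → Matrix ι ι R) :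
    (1 - superdiagBlockMatrix C) * tailProdColumn C = lastBlockColumn C := by
  ext ⟨p, i⟩ j
  rw [Matrix.sub_mul, Matrix.one_mul]
  simp only [Matrix.sub_apply, mul_apply, Fintype.sum_prod_type, superdiagBlockMatrix,
    tailProdColumn, lastBlockColumn, of_apply, ite_mul, zero_mul, Finset.sum_ite_irrel,
    Finset.sum_const_zero]
  rw [List.prod_drop_ofFn]
  by_cases h : (p : ℕ) + 1 < n
  · have hsucc : ∀ q : Fin n, (q : ℕ) = p + 1 ↔ q = ⟨p + 1, h⟩ := fun q => by
      simp [Fin.ext_iff]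
    simp only [hsucc, Finset.sum_ite_eq', Finset.mem_univ, if_true, ← mul_apply, sub_self,
      h.ne, if_false]
  · have hlast : (p : ℕ) + 1 = n := by omega
    have hnone : ∀ q : Fin n, (q : ℕ) ≠ p + 1 := fun q => by
      have := q.isLt; omega
    simp only [hnone, if_false, Finset.sum_const_zero, sub_zero]
    simp [hlast, List.drop_eq_nil_of_le]

theorem firstBlockRow_mul_tailProdColumn [NeZero n] (C : Fin n → Matrix ι ι R) :
    firstBlockRow n ι R * tailProdColumn C = (List.ofFn C).prod := by
  ext i j
  simp [firstBlockRow, tailProdColumn, mul_apply, Fintype.sum_prod_type, one_apply]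

theorem det_one_sub_cyclicBlockMatrix [NeZero n] (C : Fin n → Matrix ι ι R) :
    (1 - cyclicBlockMatrix C).det = (1 - (List.ofFn C).prod).det := by
  have factor : 1 - cyclicBlockMatrix C =
      (1 - superdiagBlockMatrix C) * (1 - tailProdColumn C * firstBlockRow n ι R) := by
    rw [mul_sub, mul_one, ← Matrix.mul_assoc, one_sub_superdiagBlockMatrix_mul_tailProdColumn,
      cyclicBlockMatrix_eq_superdiag_add, sub_add_eq_sub_sub]
  rw [factor, det_mul, det_one_sub_superdiagBlockMatrix, one_mul, det_one_sub_mul_comm,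
    firstBlockRow_mul_tailProdColumn]

end CyclicBlockMatrix

/-- block-determinant lemma.  For `m × m` matrices `A, B` over a
commutative ring and a scalar `t`, the `n·m × n·m` block matrix with identity blocks
on the diagonal, block `−t·AB` in position `(1,2)`, blocks `−t·B` in positions
`(2,3), …, (n−1,n)` and `(n,1)`, and zeros elsewhere, has determinant
`det(I_m − tⁿ·A·Bⁿ)`. -/
theorem det_cyclic_block_matrix {R : Type*} [CommRing R] {n m : ℕ} [NeZero n]
    (hn : 2 ≤ n) (A B : Matrix (Fin m) (Fin m) R) (t : R) :
    (Matrix.of (fun p q : Fin n × Fin m =>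
        if q.1 = p.1 then (1 : Matrix (Fin m) (Fin m) R) p.2 q.2
        else if q.1 = p.1 + 1 then
          (if p.1 = 0 then (-(t • (A * B))) p.2 q.2 else (-(t • B)) p.2 q.2)
        else 0)).det =
      ((1 : Matrix (Fin m) (Fin m) R) - t ^ n • (A * B ^ n)).det := by
  let C : Fin n → Matrix (Fin m) (Fin m) R := fun p => if p = 0 then t • (A * B) else t • B
  have hprod : (List.ofFn C).prod = t ^ n • (A * B ^ n) := by
    obtain ⟨k, rfl⟩ := Nat.exists_eq_succ_of_ne_zero (NeZero.ne n)
    rw [List.prod_ofFn_ite_zero, smul_pow, smul_mul_smul, ← pow_succ', Matrix.mul_assoc,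
      ← pow_succ']
  rw [← hprod, ← det_one_sub_cyclicBlockMatrix]
  congr 1
  ext ⟨p, i⟩ ⟨q, j⟩
  have hsucc := Fin.add_one_ne_self hn p
  by_cases hqp : q = p
  · subst hqp
    simp [cyclicBlockMatrix, one_apply, hsucc.symm]
  · simp only [cyclicBlockMatrix, C, of_apply, Matrix.sub_apply, one_apply, Prod.mk.injEq, hqp,
      Ne.symm hqp, false_and, if_false, zero_sub]
    split_ifs <;> simp
end
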